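/- arXiv:2009.09190 — 7 statements merged into one kernel-verified Lean document; each statement's English description precedes it below -/
import Mathlib

section
/- Let w ≥ 1, let p be a prime with p ≥ w, let q be coprime with p with q ≥ 2w−1, let L' = pq, and let g ∈ {1,...,p−1}. The Hamming auto-correlation of the CRT-UI sequence u_g with generator g satisfies: for τ ∈ Z_{L'}, if Φ_{p,q}(τ) = (gd mod p, d mod q) or Φ_{p,q}(τ) = (−gd mod p, −d mod q) for some d ∈ {0,1,...,w−1}, then H_{g,g}(τ) = w − d; for all other τ, H_{g,g}(τ) = 0. -/
/-- The CRT-UI sequence of period `p*q` with weight `w` and generator `g`: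
`u_g(t) = 1` iff `Φ_{p,q}(t) = (u*g mod p, u mod q)` for some `u ∈ {0,...,w-1}`.
It is modeled as a function `ℕ → ℕ` (indexed modulo `p*q`). -/
def crtUI (p q w g : ℕ) : ℕ → ℕ := fun t =>
  if ∃ u ∈ Finset.range w, t % p = (u * g) % p ∧ t % q = u % q then 1 else 0

/-- The Hamming auto-correlation of the CRT-UI sequence `u_g` at offset `τ`. -/
def crtUIAutoCorr (p q w g : ℕ) (τ : ℕ) : ℕ :=
  ∑ t ∈ Finset.range (p * q), crtUI p q w g t * crtUI p q w g ((t + τ) % (p * q))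

/-! The ones of `u_g` sit at the CRT lifts `c u < p q` of `(u g, u)`, `u < w`, which are
distinct because `w ≤ q`. Hence `H(τ)` counts the `u < w` for which `c u + τ` is again a one
`c v`, i.e. `u g + τ ≡ v g [MOD p]` and `u + τ ≡ v [MOD q]`. As `|v - u| < w` and
`2 w - 1 ≤ q`, the congruence mod `q` pins down the integer `v - u`: for `Φ(τ) = (g d, d)` the
coincidences are exactly the pairs `v = u + d`, for `Φ(τ) = (-g d, -d)` exactly the pairs
`u = v + d`, and in both cases there are `w - d` of them. Conversely any coincidence puts `τ`
in one of these two classes with `d = |v - u| < w`. -/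

open Finset

/-- The indices `u < w` of the ones `c u` of `u_g` for which `c u + τ` is again a one. -/
def crtUIShifts (p q w g τ : ℕ) : Finset ℕ :=
  {u ∈ range w | ∃ v ∈ range w, u * g + τ ≡ v * g [MOD p] ∧ u + τ ≡ v [MOD q]}

lemma mem_crtUIShifts {p q w g τ u : ℕ} :
    u ∈ crtUIShifts p q w g τ ↔
      u < w ∧ ∃ v < w, u * g + τ ≡ v * g [MOD p] ∧ u + τ ≡ v [MOD q] := by
  simp only [crtUIShifts, mem_filter, mem_range]

section CRTUI

variable {p q w g : ℕ}

lemma crtUI_congr {t t' : ℕ} (hp : t ≡ t' [MOD p]) (hq : t ≡ t' [MOD q]) :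
    crtUI p q w g t = crtUI p q w g t' := by
  unfold crtUI Nat.ModEq at *
  rw [hp, hq]

lemma crtUI_mod_mul (t : ℕ) : crtUI p q w g (t % (p * q)) = crtUI p q w g t :=
  crtUI_congr ((Nat.mod_modEq t _).of_mul_right q) ((Nat.mod_modEq t _).of_mul_left p)

lemma filter_range_mul_crtUI_eq_image (hpq : p.Coprime q) (hp : p ≠ 0) (hq : q ≠ 0) :
    {t ∈ range (p * q) | ∃ u ∈ range w, t % p = u * g % p ∧ t % q = u % q} =
      (range w).image fun u => (Nat.chineseRemainder hpq (u * g) u : ℕ) := by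
  ext t
  simp only [mem_filter, mem_range, mem_image]
  constructor
  · rintro ⟨ht, u, hu, htp, htq⟩
    exact ⟨u, hu, ((Nat.modEq_and_modEq_iff_modEq_mul hpq).1
      ⟨(Nat.chineseRemainder hpq (u * g) u).2.1.trans htp.symm,
        (Nat.chineseRemainder hpq (u * g) u).2.2.trans htq.symm⟩).eq_of_lt_of_lt
      (Nat.chineseRemainder_lt_mul hpq _ _ hp hq) ht⟩
  · rintro ⟨u, hu, rfl⟩
    exact ⟨Nat.chineseRemainder_lt_mul hpq _ _ hp hq, u, hu,
      (Nat.chineseRemainder hpq (u * g) u).2.1, (Nat.chineseRemainder hpq (u * g) u).2.2⟩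

lemma injOn_range_chineseRemainder (hpq : p.Coprime q) (hwq : w ≤ q) :
    Set.InjOn (fun u => (Nat.chineseRemainder hpq (u * g) u : ℕ)) (range w) := by
  intro u hu v hv huv
  simp only [coe_range, Set.mem_Iio] at hu hv
  have h : u ≡ v [MOD q] :=
    calc u ≡ Nat.chineseRemainder hpq (u * g) u [MOD q] :=
          (Nat.chineseRemainder hpq (u * g) u).2.2.symm
      _ = Nat.chineseRemainder hpq (v * g) v := huv
      _ ≡ v [MOD q] := (Nat.chineseRemainder hpq (v * g) v).2.2
  exact h.eq_of_lt_of_lt (by omega) (by omega)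

theorem crtUIAutoCorr_eq_card_crtUIShifts (hpq : p.Coprime q) (hp : p ≠ 0) (hq : q ≠ 0)
    (hwq : w ≤ q) (τ : ℕ) :
    crtUIAutoCorr p q w g τ = #(crtUIShifts p q w g τ) := by
  let c u := (Nat.chineseRemainder hpq (u * g) u : ℕ)
  calc crtUIAutoCorr p q w g τ
      = ∑ t ∈ range (p * q), if ∃ u ∈ range w, t % p = u * g % p ∧ t % q = u % q
          then crtUI p q w g ((t + τ) % (p * q)) else 0 :=
        sum_congr rfl fun t _ => by unfold crtUI; split_ifs <;> simp
    _ = ∑ u ∈ range w, crtUI p q w g (c u + τ) := by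
        rw [← sum_filter, filter_range_mul_crtUI_eq_image hpq hp hq,
          sum_image (injOn_range_chineseRemainder hpq hwq)]
        simp only [crtUI_mod_mul, c]
    _ = _ := by
        rw [crtUIShifts, card_filter]
        refine sum_congr rfl fun u _ => ?_
        have hcp : (c u + τ) % p = (u * g + τ) % p :=
          (Nat.chineseRemainder hpq (u * g) u).2.1.add_right τ
        have hcq : (c u + τ) % q = (u + τ) % q :=
          (Nat.chineseRemainder hpq (u * g) u).2.2.add_right τ
        simp only [crtUI, hcp, hcq]
        rfl

end CRTUI

section Shifts

variable {p q w g τ : ℕ}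

lemma shift_add_iff (u d : ℕ) :
    (u * g + τ ≡ (u + d) * g [MOD p] ∧ u + τ ≡ u + d [MOD q]) ↔
      (τ ≡ g * d [MOD p] ∧ τ ≡ d [MOD q]) := by
  rw [add_mul, mul_comm d g]
  exact and_congr ⟨Nat.ModEq.add_left_cancel' _, Nat.ModEq.add_left _⟩
    ⟨Nat.ModEq.add_left_cancel' _, Nat.ModEq.add_left _⟩

lemma shift_add_iff' (v d : ℕ) :
    ((v + d) * g + τ ≡ v * g [MOD p] ∧ v + d + τ ≡ v [MOD q]) ↔
      ((τ + g * d) % p = 0 ∧ (τ + d) % q = 0) := by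
  rw [show (v + d) * g + τ = v * g + (τ + g * d) by ring, add_assoc, add_comm d τ,
    Nat.add_modEq_left_iff, Nat.add_modEq_left_iff, Nat.dvd_iff_mod_eq_zero,
    Nat.dvd_iff_mod_eq_zero]

lemma exists_lt_of_shift {u v : ℕ} (hu : u < w) (hv : v < w)
    (h : u * g + τ ≡ v * g [MOD p] ∧ u + τ ≡ v [MOD q]) :
    ∃ d < w, (τ ≡ g * d [MOD p] ∧ τ ≡ d [MOD q]) ∨
      ((τ + g * d) % p = 0 ∧ (τ + d) % q = 0) := by
  rcases le_total u v with huv | hvu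
  · obtain ⟨d, rfl⟩ := Nat.exists_eq_add_of_le huv
    exact ⟨d, by omega, .inl ((shift_add_iff u d).1 h)⟩
  · obtain ⟨d, rfl⟩ := Nat.exists_eq_add_of_le hvu
    exact ⟨d, by omega, .inr ((shift_add_iff' v d).1 h)⟩

lemma crtUIShifts_eq_range (hq : 2 * w - 1 ≤ q) {d : ℕ} (hd : d < w)
    (hτ : τ ≡ g * d [MOD p] ∧ τ ≡ d [MOD q]) :
    crtUIShifts p q w g τ = range (w - d) := by
  ext u
  simp only [mem_crtUIShifts, mem_range]
  constructor
  · rintro ⟨hu, v, hv, -, hvq⟩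
    have : u + d = v := ((hτ.2.add_left u).symm.trans hvq).eq_of_lt_of_lt (by omega) (by omega)
    omega
  · intro hu
    exact ⟨by omega, u + d, by omega, (shift_add_iff u d).2 hτ⟩

lemma crtUIShifts_eq_Ico (hq : 2 * w - 1 ≤ q) {d : ℕ} (hd : d < w)
    (hτ : (τ + g * d) % p = 0 ∧ (τ + d) % q = 0) :
    crtUIShifts p q w g τ = Ico d w := by
  ext u
  simp only [mem_crtUIShifts, mem_Ico]
  constructor
  · rintro ⟨hu, v, hv, -, hvq⟩
    have hτq : τ + d ≡ 0 [MOD q] := Nat.modEq_zero_iff_dvd.2 (Nat.dvd_of_mod_eq_zero hτ.2)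
    have : u ≡ v + d [MOD q] :=
      calc u = u + 0 := rfl
        _ ≡ u + (τ + d) [MOD q] := hτq.symm.add_left u
        _ = u + τ + d := (add_assoc _ _ _).symm
        _ ≡ v + d [MOD q] := hvq.add_right d
    have := this.eq_of_lt_of_lt (by omega) (by omega)
    omega
  · rintro ⟨hdu, hu⟩
    obtain ⟨v, rfl⟩ := Nat.exists_eq_add_of_le' hdu
    exact ⟨hu, v, by omega, (shift_add_iff' v d).2 hτ⟩

end Shifts

theorem crtUI_autoCorrelation_general
    (w p q g : ℕ) (hw : 1 ≤ w) (hp : p.Prime)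
    (hpq : Nat.Coprime p q) (hq : 2 * w - 1 ≤ q)
    (τ : ℕ) :
    (∀ d < w,
      ((τ % p = (g * d) % p ∧ τ % q = d % q) ∨
        ((τ + g * d) % p = 0 ∧ (τ + d) % q = 0)) →
      crtUIAutoCorr p q w g τ = w - d) ∧
    ((∀ d < w,
      ¬((τ % p = (g * d) % p ∧ τ % q = d % q) ∨
        ((τ + g * d) % p = 0 ∧ (τ + d) % q = 0))) →
      crtUIAutoCorr p q w g τ = 0) := by
  rw [crtUIAutoCorr_eq_card_crtUIShifts hpq hp.ne_zero (by omega) (by omega)]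
  refine ⟨fun d hd hτd => ?_, fun hnone => ?_⟩
  · rcases hτd with hτd | hτd
    · rw [crtUIShifts_eq_range hq hd hτd, card_range]
    · rw [crtUIShifts_eq_Ico hq hd hτd, Nat.card_Ico]
  · refine card_eq_zero.2 (eq_empty_of_forall_notMem fun u hu => ?_)
    obtain ⟨hu, v, hv, hshift⟩ := mem_crtUIShifts.1 hu
    obtain ⟨d, hd, hτd⟩ := exists_lt_of_shift hu hv hshift
    exact hnone d hd hτd

/-- the Hamming auto-correlation of a CRT-UI sequence with generator
`g ∈ {1,...,p-1}` equals `w - d` at offsets `τ` with `Φ_{p,q}(τ) = ±(g,1)·d` for some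
`d ∈ {0,...,w-1}`, and equals `0` at all other offsets.
(Here `Φ_{p,q}(τ) = (g·d mod p, d mod q)` is expressed as
`τ % p = (g*d) % p ∧ τ % q = d % q`, and `Φ_{p,q}(τ) = (-g·d mod p, -d mod q)` as
`(τ + g*d) % p = 0 ∧ (τ + d) % q = 0`.) -/
theorem crtUI_autoCorrelation
    (w p q g : ℕ) (hw : 1 ≤ w) (hp : p.Prime) (hpw : w ≤ p)
    (hpq : Nat.Coprime p q) (hq : 2 * w - 1 ≤ q)
    (hg1 : 1 ≤ g) (hg2 : g ≤ p - 1) (τ : ℕ) (hτ : τ < p * q) :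
    (∀ d < w,
      ((τ % p = (g * d) % p ∧ τ % q = d % q) ∨
        ((τ + g * d) % p = 0 ∧ (τ + d) % q = 0)) →
      crtUIAutoCorr p q w g τ = w - d) ∧
    ((∀ d < w,
      ¬((τ % p = (g * d) % p ∧ τ % q = d % q) ∨
        ((τ + g * d) % p = 0 ∧ (τ + d) % q = 0))) →
      crtUIAutoCorr p q w g τ = 0) :=
  crtUI_autoCorrelation_general w p q g hw hp hpq hq τ
end

section
/- Let s_1,...,s_K be binary sequences of common period L such that each sequence has Hamming weight at least K, and such that for all i ≠ j and every relative time offset τ ∈ Z_L the Hamming cross-correlation satisfies H_{i,j}(τ) ≤ 1. Then {s_1,...,s_K} is a (K,L)-UI sequence set. -/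
/-- A set of `K` binary sequences of common period `L` (modeled as functions `ℕ → ℕ`
with values in `{0,1}`, indexed modulo `L`) is a `(K,L)`-UI sequence set if for all
time offsets `τ_1,...,τ_K ∈ Z_L` and every `i` there is a time slot `t ∈ Z_L` at which
sequence `i` (shifted by `τ_i`) has a `1` and every other sequence `j` (shifted by
`τ_j`) has a `0`. -/
def IsUISet (K L : ℕ) (s : Fin K → ℕ → ℕ) : Prop :=
  ∀ τ : Fin K → ℕ, (∀ i, τ i < L) → ∀ i : Fin K, ∃ t < L,
    s i ((t + τ i) % L) = 1 ∧ ∀ j : Fin K, j ≠ i → s j ((t + τ j) % L) = 0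

/-!
Fix the offsets and let `B j ⊆ Z_L` be the support of the shifted sequence `j`. Then
`|B i| ≥ K`, while `|B i ∩ B j|` is a cross-correlation of `s i` and `s j` (at their relative
offset), hence at most `1` for `j ≠ i`. So the other `K - 1` supports cover at most `K - 1`
points of `B i`, and any remaining point of `B i` is a slot where only sequence `i` is `1`.
-/

open Finset

namespace Finset

theorem exists_mem_forall_notMem_of_sum_card_inter_lt {ι α : Type*} [DecidableEq α]
    {A : Finset α} {J : Finset ι} {B : ι → Finset α} (h : ∑ j ∈ J, #(A ∩ B j) < #A) :
    ∃ t ∈ A, ∀ j ∈ J, t ∉ B j := by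
  by_contra! hcover
  have hsub : A ⊆ J.biUnion fun j => A ∩ B j := fun t ht => by
    obtain ⟨j, hj, htj⟩ := hcover t ht
    exact mem_biUnion.2 ⟨j, hj, mem_inter.2 ⟨ht, htj⟩⟩
  exact (card_le_card hsub |>.trans card_biUnion_le).not_gt h

theorem exists_mem_forall_ne_notMem_of_card_inter_le_one {ι α : Type*} [Fintype ι]
    [DecidableEq ι] [DecidableEq α] {B : ι → Finset α} {i : ι}
    (hcard : Fintype.card ι ≤ #(B i)) (hinter : ∀ j ≠ i, #(B i ∩ B j) ≤ 1) :
    ∃ t ∈ B i, ∀ j ≠ i, t ∉ B j := by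
  have hsum : ∑ j ∈ univ.erase i, #(B i ∩ B j) ≤ Fintype.card ι - 1 := by
    simpa [card_erase_of_mem] using
      sum_le_card_nsmul (univ.erase i) _ 1 fun j hj => hinter j (ne_of_mem_erase hj)
  have hpos : 0 < Fintype.card ι := Fintype.card_pos_iff.2 ⟨i⟩
  obtain ⟨t, ht, hfree⟩ :=
    exists_mem_forall_notMem_of_sum_card_inter_lt (A := B i) (J := univ.erase i) (B := B)
      (by omega)
  exact ⟨t, ht, fun j hj => hfree j (mem_erase.2 ⟨hj, mem_univ j⟩)⟩

end Finset

section CyclicShift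

variable {M : Type*} [AddCommMonoid M]

theorem sum_range_comp_add_mod (L a : ℕ) (f : ℕ → M) :
    ∑ t ∈ range L, f ((t + a) % L) = ∑ t ∈ range L, f t := by
  rcases L.eq_zero_or_pos with rfl | hL
  · simp
  have : NeZero L := NeZero.of_pos hL
  have hval : ∀ x : Fin L, ((x + Fin.ofNat L a : Fin L) : ℕ) = (x + a) % L := fun x => by
    rw [Fin.val_add, Fin.val_ofNat, Nat.add_mod_mod]
  rw [sum_range, sum_range]
  simpa only [Equiv.coe_addRight, hval] using
    Equiv.sum_comp (Equiv.addRight (Fin.ofNat L a)) fun x => f x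

theorem card_filter_range_add_mod (L a : ℕ) (p : ℕ → Prop) [DecidablePred p] :
    #{t ∈ range L | p ((t + a) % L)} = #{t ∈ range L | p t} := by
  rw [card_filter, card_filter, sum_range_comp_add_mod L a fun u => if p u then 1 else 0]

/-- The relative offset is `τ = (b - a) mod L`, written `(b + (L - a % L)) % L` in `ℕ`. -/
theorem exists_sum_range_add_mod_eq {L : ℕ} (hL : 0 < L) (a b : ℕ) (F : ℕ → ℕ → M) :
    ∃ τ < L, ∑ t ∈ range L, F ((t + a) % L) ((t + b) % L)
      = ∑ t ∈ range L, F t ((t + τ) % L) := by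
  refine ⟨(b + (L - a % L)) % L, Nat.mod_lt _ hL, ?_⟩
  rw [← sum_range_comp_add_mod L a fun t => F t ((t + (b + (L - a % L)) % L) % L)]
  refine sum_congr rfl fun t _ => congrArg (F _) ?_
  have hcancel : t + a + (b + (L - a % L)) = t + b + L * (a / L + 1) := by
    have := Nat.div_add_mod a L
    have := Nat.mod_lt a hL
    rw [Nat.mul_succ]
    omega
  rw [Nat.mod_add_mod, Nat.add_mod_mod, hcancel, Nat.add_mul_mod_self_left]

end CyclicShift

theorem card_filter_eq_one_and_eq_one_le_sum_mul (S : Finset ℕ) (f g : ℕ → ℕ) :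
    #{t ∈ S | f t = 1 ∧ g t = 1} ≤ ∑ t ∈ S, f t * g t := by
  rw [card_filter]
  refine sum_le_sum fun t _ => ?_
  split_ifs with h
  · simp [h.1, h.2]
  · exact Nat.zero_le _

/-- if each of `K` binary sequences of period `L` has Hamming weight
at least `K`, and the Hamming cross-correlation between any two distinct sequences is
at most `1` at every relative offset, then they form a `(K,L)`-UI sequence set. -/
theorem isUISet_of_weight_ge_and_crossCorrelation_le_one
    (K L : ℕ) (hL : 0 < L) (s : Fin K → ℕ → ℕ)
    (hbin : ∀ i t, s i t = 0 ∨ s i t = 1)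
    (hweight : ∀ i : Fin K, K ≤ ((Finset.range L).filter (fun t => s i t = 1)).card)
    (hcorr : ∀ i j : Fin K, i ≠ j → ∀ τ < L,
      ∑ t ∈ Finset.range L, s i t * s j ((t + τ) % L) ≤ 1) :
    IsUISet K L s := by
  intro τ _ i
  set B : Fin K → Finset ℕ := fun j => {t ∈ range L | s j ((t + τ j) % L) = 1}
  have hcard : Fintype.card (Fin K) ≤ #(B i) := by
    simpa [B, card_filter_range_add_mod L (τ i) fun u => s i u = 1] using hweight i
  have hinter : ∀ j ≠ i, #(B i ∩ B j) ≤ 1 := fun j hj => by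
    obtain ⟨τ', hτ', hshift⟩ :=
      exists_sum_range_add_mod_eq hL (τ i) (τ j) fun u v => s i u * s j v
    calc #(B i ∩ B j)
        = #{t ∈ range L | s i ((t + τ i) % L) = 1 ∧ s j ((t + τ j) % L) = 1} := by
          rw [filter_and]
      _ ≤ ∑ t ∈ range L, s i ((t + τ i) % L) * s j ((t + τ j) % L) :=
          card_filter_eq_one_and_eq_one_le_sum_mul _ _ _
      _ ≤ 1 := hshift ▸ hcorr i j hj.symm τ' hτ'
  obtain ⟨t, ht, hfree⟩ := exists_mem_forall_ne_notMem_of_card_inter_le_one hcard hinter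
  obtain ⟨htL, hti⟩ := mem_filter.1 ht
  refine ⟨t, mem_range.1 htL, hti, fun j hj => (hbin j _).resolve_right fun htj => ?_⟩
  exact hfree j hj (mem_filter.2 ⟨htL, htj⟩)
end

section
/- For every prime K, there exists a (K, L)-UI sequence set with period L = K(2K−1) (obtained from the CRT-UI construction with weight w = K, p = K and q = 2K−1). -/
theorem Fintype.exists_forall_not_of_subsingleton {ι α : Type*} [Fintype ι] [Fintype α]
    (P : ι → α → Prop) (hP : ∀ j, {a | P j a}.Subsingleton)
    (hcard : Fintype.card ι < Fintype.card α) : ∃ a, ∀ j, ¬ P j a := by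
  by_contra! h
  choose f hf using h
  have hf_inj : Function.Injective f := fun a a' haa' => hP (f a) (hf a) (haa' ▸ hf a')
  exact (Fintype.card_le_of_injective f hf_inj).not_gt hcard

/-- The paper's CRT-UI sequence of slope `j`, with weight `w = p`. -/
def crtUISeq (p q j t : ℕ) : ℕ :=
  if t % q = j * (t % p) % p then 1 else 0

namespace crtUISeq

variable {p q : ℕ}

theorem eq_zero_or_eq_one (j t : ℕ) : crtUISeq p q j t = 0 ∨ crtUISeq p q j t = 1 := by
  unfold crtUISeq
  split_ifs <;> simp

theorem mod_mul (j n : ℕ) : crtUISeq p q j (n % (p * q)) = crtUISeq p q j n := by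
  simp only [crtUISeq, Nat.mod_mod_of_dvd n (dvd_mul_right p q),
    Nat.mod_mod_of_dvd n (dvd_mul_left q p)]

theorem mod_add_mod_mul (j n m : ℕ) :
    crtUISeq p q j ((n % (p * q) + m) % (p * q)) = crtUISeq p q j (n + m) := by
  rw [Nat.mod_add_mod, mod_mul]

theorem exists_mod_eq_and_eq_one (hpq : p.Coprime q) (hpq' : p ≤ q) (j : ℕ) {a : ℕ}
    (ha : a < p) : ∃ u, u % p = a ∧ crtUISeq p q j u = 1 := by
  obtain ⟨u, hup, huq⟩ := Nat.chineseRemainder hpq a (j * a % p)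
  have hup : u % p = a := Eq.trans hup (Nat.mod_eq_of_lt ha)
  have huq : u % q = j * a % p :=
    Eq.trans huq (Nat.mod_eq_of_lt ((Nat.mod_lt _ (by omega)).trans_le hpq'))
  exact ⟨u, hup, by simp [crtUISeq, hup, huq]⟩

theorem mod_eq_of_eq_one_of_add_eq_one (hp : p.Prime) (hq : 2 * p - 1 ≤ q) {i j : ℕ}
    (hij : (i : ZMod p) ≠ j) {u u' δ : ℕ}
    (hu : crtUISeq p q i u = 1) (hu' : crtUISeq p q i u' = 1)
    (hv : crtUISeq p q j (u + δ) = 1) (hv' : crtUISeq p q j (u' + δ) = 1) :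
    u % p = u' % p := by
  have : Fact p.Prime := ⟨hp⟩
  simp only [crtUISeq, ite_eq_left_iff, zero_ne_one, imp_false, not_not] at hu hu' hv hv'
  have hmod : u % q + (u' + δ) % q ≡ (u + δ) % q + u' % q [MOD q] :=
    calc _ ≡ u + (u' + δ) [MOD q] := (Nat.mod_modEq _ _).add (Nat.mod_modEq _ _)
      _ = (u + δ) + u' := by ring
      _ ≡ _ [MOD q] := ((Nat.mod_modEq _ _).add (Nat.mod_modEq _ _)).symm
  rw [hu, hu', hv, hv'] at hmod
  have hlt : ∀ n, n % p < p := fun n => Nat.mod_lt n hp.pos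
  have h₁ := hlt (i * (u % p)); have h₂ := hlt (j * ((u' + δ) % p))
  have h₃ := hlt (j * ((u + δ) % p)); have h₄ := hlt (i * (u' % p))
  have hy := hmod.eq_of_lt_of_lt (by omega) (by omega)
  have hx := congrArg (fun n : ℕ => (n : ZMod p)) hy
  simp only [Nat.cast_add, Nat.cast_mul, ZMod.natCast_mod] at hx
  rw [← ZMod.natCast_eq_natCast_iff', ← sub_eq_zero]
  have hprod : ((i : ZMod p) - j) * (u - u') = 0 := by linear_combination hx
  exact (mul_eq_zero.mp hprod).resolve_left (sub_ne_zero.mpr hij)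

theorem isUISet (hp : p.Prime) (hq : 2 * p - 1 ≤ q) (hpq : p.Coprime q) :
    IsUISet p (p * q) fun j => crtUISeq p q j := by
  intro τ hτ i
  dsimp only
  have hτi := hτ i
  have hp1 := hp.one_le
  have hcast : ∀ j : Fin p, j ≠ i → ((i : ℕ) : ZMod p) ≠ (j : ℕ) := fun j hj => by
    rw [Ne, ZMod.natCast_eq_natCast_iff', Nat.mod_eq_of_lt i.isLt, Nat.mod_eq_of_lt j.isLt]
    exact Fin.val_ne_of_ne hj.symm
  choose u hu_mod hu_one using fun a : Fin p =>
    exists_mod_eq_and_eq_one hpq (by omega) i a.isLt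
  -- `u a` is the one of sequence `i` in column `a`; relative to it, sequence `j` is shifted
  -- by `p * q - τ i + τ j`.
  obtain ⟨a, ha⟩ := Fintype.exists_forall_not_of_subsingleton
    (fun (j : {j : Fin p // j ≠ i}) a => crtUISeq p q j (u a + (p * q - τ i + τ j)) = 1)
    (fun j a ha a' ha' => Fin.ext <| by
      simpa [hu_mod] using
        mod_eq_of_eq_one_of_add_eq_one hp hq (hcast j j.2) (hu_one a) (hu_one a') ha ha')
    (by simp [Fintype.card_subtype_compl]; omega)
  refine ⟨(u a + (p * q - τ i)) % (p * q), Nat.mod_lt _ (by omega), ?_, fun j hj => ?_⟩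
  · rw [mod_add_mod_mul, show u a + (p * q - τ i) + τ i = u a + p * q by omega,
      ← mod_mul, Nat.add_mod_right, mod_mul, hu_one]
  · rw [mod_add_mod_mul, add_assoc]
    exact (eq_zero_or_eq_one _ _).resolve_right (ha ⟨j, hj⟩)

end crtUISeq

/-- for every prime `K` there exists a `(K, L)`-UI sequence set with
period `L = K·(2K − 1)`. -/
theorem exists_UISet_of_prime (K : ℕ) (hK : K.Prime) :
    ∃ s : Fin K → ℕ → ℕ,
      (∀ i t, s i t = 0 ∨ s i t = 1) ∧ IsUISet K (K * (2 * K - 1)) s := by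
  have hcop : K.Coprime (2 * K - 1) := by
    rw [show 2 * K - 1 = (K - 1) + K by omega, Nat.coprime_add_self_right,
      Nat.coprime_self_sub_right hK.one_le]
    exact Nat.coprime_one_right K
  exact ⟨_, fun i => crtUISeq.eq_zero_or_eq_one i, crtUISeq.isUISet hK le_rfl hcop⟩
end

section
/- For every integer K ≥ 2, there exists a (K, L)-UI sequence set whose period satisfies L ≤ 2K(2K−1). (This follows from the CRT-UI construction together with Bertrand's postulate.) -/
theorem Finset.exists_forall_not_of_card_lt {α β : Type*} {s : Finset α} {t : Finset β}
    {R : β → α → Prop} (hR : ∀ b ∈ t, ∀ x ∈ s, ∀ y ∈ s, R b x → R b y → x = y)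
    (hcard : t.card < s.card) : ∃ x ∈ s, ∀ b ∈ t, ¬ R b x := by
  by_contra! h
  obtain ⟨x₀, hx₀⟩ := card_pos.mp (hcard.trans_le' (Nat.zero_le _))
  have : Nonempty β := ⟨(h x₀ hx₀).choose⟩
  choose! f hft hf using h
  obtain ⟨x, hx, y, hy, hxy, hfxy⟩ := exists_ne_map_eq_of_card_lt_of_maps_to hcard hft
  exact hxy (hR (f x) (hft x hx) x hx y hy (hf x hx) (hfxy ▸ hf y hy))

namespace ZMod

theorem natCast_inj_of_lt {n a b : ℕ} (ha : a < n) (hb : b < n) (h : (a : ZMod n) = b) :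
    a = b := by
  rwa [natCast_eq_natCast_iff', Nat.mod_eq_of_lt ha, Nat.mod_eq_of_lt hb] at h

theorem natCast_mod_of_dvd {m n : ℕ} (h : m ∣ n) (a : ℕ) : ((a % n : ℕ) : ZMod m) = a :=
  (natCast_eq_natCast_iff' _ _ _).mpr (Nat.mod_mod_of_dvd a h)

theorem exists_lt_natCast_add_eq {q p : ℕ} [NeZero (q * p)] (hco : q.Coprime p) (τ : ℕ)
    (a : ZMod q) (b : ZMod p) :
    ∃ T < q * p, ((T + τ : ℕ) : ZMod q) = a ∧ ((T + τ : ℕ) : ZMod p) = b := by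
  set z := (chineseRemainder hco).symm (a, b)
  refine ⟨(z - τ).val, val_lt _, ?_⟩
  have hz : (((z - τ).val + τ : ℕ) : ZMod (q * p)) = z := by
    push_cast; rw [natCast_zmod_val]; ring
  have hcrt : chineseRemainder hco z = (a, b) := (chineseRemainder hco).apply_symm_apply _
  rw [← hz] at hcrt
  simpa [chineseRemainder, Prod.ext_iff, cast_natCast (Dvd.intro _ rfl),
    cast_natCast (Dvd.intro_left _ rfl)] using hcrt

end ZMod

theorem eq_of_translate_mem_lines {K q p : ℕ} [Fact p.Prime] (hKp : K < p)
    (hKq : 2 * K - 1 ≤ q) {i j x x' y y' : ℕ} (hi : i < p) (hj : j < p) (hij : i ≠ j)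
    (hx : x < K) (hx' : x' < K) (hy : y < K) (hy' : y' < K) (δ : ZMod q) (ε : ZMod p)
    (hq : (y : ZMod q) = x + δ) (hq' : (y' : ZMod q) = x' + δ)
    (hp : (j * y : ZMod p) = i * x + ε) (hp' : (j * y' : ZMod p) = i * x' + ε) :
    x = x' := by
  have hsum : y + x' = y' + x :=
    ZMod.natCast_inj_of_lt (n := q) (by omega) (by omega) <| by
      push_cast; linear_combination hq - hq'
  have hprod : ((i : ZMod p) - j) * (x - x') = 0 := by
    have hsum_p : (y + x' : ZMod p) = y' + x := by exact_mod_cast congrArg Nat.cast hsum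
    linear_combination hp' - hp + j * hsum_p
  rcases mul_eq_zero.mp hprod with h | h
  · exact absurd (ZMod.natCast_inj_of_lt (by omega) (by omega) (sub_eq_zero.mp h)) hij
  · exact ZMod.natCast_inj_of_lt (by omega) (by omega) (sub_eq_zero.mp h)

/-- Under `ℤ/qp ≅ ℤ/q × ℤ/p`, the support of sequence `i` is `{(x, i x) : x < K}`. -/
def crtSeq (K q p : ℕ) (i : Fin K) (n : ℕ) : ℕ :=
  if ∃ x < K, (n : ZMod q) = x ∧ (n : ZMod p) = i * x then 1 else 0

theorem crtSeq_eq_zero_or_one (K q p : ℕ) (i : Fin K) (n : ℕ) :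
    crtSeq K q p i n = 0 ∨ crtSeq K q p i n = 1 := by
  unfold crtSeq; split_ifs <;> simp

theorem crtSeq_eq_one_iff {K q p : ℕ} {i : Fin K} {n : ℕ} :
    crtSeq K q p i n = 1 ↔ ∃ x < K, (n : ZMod q) = x ∧ (n : ZMod p) = i * x := by
  unfold crtSeq; split_ifs with h <;> simp [h]

theorem isUISet_crtSeq {K q p : ℕ} (hp : p.Prime) (hKp : K < p) (hKq : 2 * K - 1 ≤ q)
    (hco : q.Coprime p) : IsUISet K (q * p) (crtSeq K q p) := by
  have := Fact.mk hp
  intro τ hτ i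
  have : NeZero (q * p) := ⟨(Nat.zero_le _).trans_lt (hτ i) |>.ne'⟩
  choose T hTlt hTq hTp using fun x : ℕ => ZMod.exists_lt_natCast_add_eq hco (τ i) x (i * x)
  have hbad_unique : ∀ j ∈ Finset.univ.erase i, ∀ x ∈ Finset.range K, ∀ x' ∈ Finset.range K,
      crtSeq K q p j ((T x + τ j) % (q * p)) = 1 →
      crtSeq K q p j ((T x' + τ j) % (q * p)) = 1 → x = x' := by
    intro j hj x hx x' hx' hbad hbad'
    obtain ⟨y, hy, hyq, hyp⟩ := crtSeq_eq_one_iff.mp hbad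
    obtain ⟨y', hy', hyq', hyp'⟩ := crtSeq_eq_one_iff.mp hbad'
    rw [ZMod.natCast_mod_of_dvd (dvd_mul_right q p)] at hyq hyq'
    rw [ZMod.natCast_mod_of_dvd (dvd_mul_left p q)] at hyp hyp'
    refine eq_of_translate_mem_lines hKp hKq (i.2.trans hKp) (j.2.trans hKp) (by simpa [Fin.val_ne_iff, eq_comm] using hj)
      (Finset.mem_range.mp hx) (Finset.mem_range.mp hx') hy hy' ((τ j : ZMod q) - τ i)
      ((τ j : ZMod p) - τ i) ?_ ?_ ?_ ?_
    · rw [← hyq, ← hTq x]; push_cast; ring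
    · rw [← hyq', ← hTq x']; push_cast; ring
    · rw [← hyp, ← hTp x]; push_cast; ring
    · rw [← hyp', ← hTp x']; push_cast; ring
  obtain ⟨x, hx, hgood⟩ := Finset.exists_forall_not_of_card_lt hbad_unique
    (by simpa using Nat.sub_one_lt_of_lt i.2)
  refine ⟨T x, hTlt x, crtSeq_eq_one_iff.mpr ⟨x, Finset.mem_range.mp hx, ?_, ?_⟩, fun j hj => ?_⟩
  · rw [ZMod.natCast_mod_of_dvd (dvd_mul_right q p), hTq]
  · rw [ZMod.natCast_mod_of_dvd (dvd_mul_left p q), hTp]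
  · exact (crtSeq_eq_zero_or_one _ _ _ _ _).resolve_right (hgood j (by simpa using hj))

/-- for every integer `K ≥ 2` there exists a `(K, L)`-UI sequence set
whose period satisfies `L ≤ 2K(2K − 1)`. -/
theorem exists_UISet_le (K : ℕ) (hK : 2 ≤ K) :
    ∃ (L : ℕ) (s : Fin K → ℕ → ℕ),
      0 < L ∧ L ≤ 2 * K * (2 * K - 1) ∧
      (∀ i t, s i t = 0 ∨ s i t = 1) ∧ IsUISet K L s := by
  obtain ⟨p, hp, hKp, hp_le⟩ := Nat.exists_prime_lt_and_le_two_mul K (by omega)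
  have hp_lt : p < 2 * K :=
    hp_le.lt_of_ne fun h => by have := (hp.even_iff).mp ⟨K, by omega⟩; omega
  have hco : (2 * K).Coprime p := Nat.Coprime.symm <| hp.coprime_iff_not_dvd.mpr fun h => by
    rcases hp.dvd_mul.mp h with h | h <;> have := Nat.le_of_dvd (by omega) h <;> omega
  exact ⟨2 * K * p, crtSeq K (2 * K) p, Nat.mul_pos (by omega) hp.pos,
    Nat.mul_le_mul_left _ (by omega), crtSeq_eq_zero_or_one K (2 * K) p, isUISet_crtSeq hp hKp (by omega) hco⟩
end

section
/- Let L and W be positive integers, let k ≥ 2 be an integer, let a_1,...,a_k be nonnegative integers with 0 < a_1 < L, and let w_2,...,w_k be nonnegative integers such that (as real numbers) w_2 ≥ L − L/W, w_j ≥ a_1 for all 3 ≤ j ≤ k, and a_j ≤ a_{j−1} − ⌈a_{j−1}·w_j/L⌉ for all 2 ≤ j ≤ k. Let ε be a real number satisfying b_2·W·ε ≤ a_1, where b_2 = ⌈a_1/W⌉, and define recursively b_j = b_{j−1} − ⌈b_{j−1}·b_2·W·ε/L⌉ for 3 ≤ j ≤ k. Then a_j ≤ b_j for all 2 ≤ j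 ≤ k. -/
/-!
Put `c = b₂ W ε`. Since `c ≤ a₁ < L`, the map `x ↦ x - ⌈x c / L⌉` is monotone on `ℤ`, and since
`c ≤ a₁ ≤ w_j` for `j ≥ 3`, each blocking step satisfies `a_j ≤ a_{j-1} - ⌈a_{j-1} c / L⌉`.
Monotonicity then carries `a_{j-1} ≤ b_{j-1}` to `a_j ≤ b_j`. The induction starts from
`a₂ ≤ a₁ - ⌈a₁ w₂ / L⌉ ≤ ⌈a₁ / W⌉ = b₂`, because `a₁ w₂ / L ≥ a₁ - a₁ / W`.
-/

section FloorRing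

variable {α : Type*} [Field α] [LinearOrder α] [IsStrictOrderedRing α] [FloorRing α]

theorem monotone_sub_ceil_mul {r : α} (hr : r ≤ 1) : Monotone fun x : ℤ => x - ⌈(x : α) * r⌉ := by
  intro x y hxy
  have hdiff : ⌈((y - x : ℤ) : α) * r⌉ ≤ y - x := by
    rw [Int.ceil_le]
    exact mul_le_of_le_one_right (by exact_mod_cast sub_nonneg.mpr hxy) hr
  have hsplit : ⌈(y : α) * r⌉ ≤ ⌈(x : α) * r⌉ + ⌈((y - x : ℤ) : α) * r⌉ := by
    calc ⌈(y : α) * r⌉ = ⌈(x : α) * r + ((y - x : ℤ) : α) * r⌉ := by push_cast; ring_nf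
      _ ≤ _ := Int.ceil_add_le _ _
  dsimp only
  omega

theorem sub_ceil_mul_div_le_ceil_div {a : ℤ} (ha : 0 ≤ a) {L W w : α} (hL : 0 < L)
    (hw : L - L / W ≤ w) : a - ⌈(a : α) * w / L⌉ ≤ ⌈(a : α) / W⌉ := by
  have hreal : (a : α) ≤ a / W + a * w / L := by
    have hLW : (a : α) - a / W = a * (L - L / W) / L := by field_simp
    have : (a : α) * (L - L / W) / L ≤ a * w / L := by gcongr
    linarith
  have hceil : (a : α) ≤ ⌈(a : α) / W⌉ + ⌈(a : α) * w / L⌉ := by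
    linarith [Int.le_ceil ((a : α) / W), Int.le_ceil ((a : α) * w / L)]
  have : a ≤ ⌈(a : α) / W⌉ + ⌈(a : α) * w / L⌉ := by exact_mod_cast hceil
  omega

end FloorRing

theorem blocking_majorant_general
    (L W k : ℕ) (hL : 0 < L)
    (a w : ℕ → ℕ) (b : ℕ → ℤ) (ε : ℝ)
    (ha1L : a 1 < L)
    (hw2 : (L : ℝ) - (L : ℝ) / (W : ℝ) ≤ (w 2 : ℝ))
    (hwj : ∀ j : ℕ, 3 ≤ j → j ≤ k → a 1 ≤ w j)
    (harec : ∀ j : ℕ, 2 ≤ j → j ≤ k →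
      (a j : ℤ) ≤ (a (j - 1) : ℤ) - ⌈((a (j - 1) : ℝ) * (w j : ℝ)) / (L : ℝ)⌉)
    (hb2 : b 2 = ⌈(a 1 : ℝ) / (W : ℝ)⌉)
    (hbrec : ∀ j : ℕ, 3 ≤ j → j ≤ k →
      b j = b (j - 1) - ⌈((b (j - 1) : ℝ) * (b 2 : ℝ) * (W : ℝ) * ε) / (L : ℝ)⌉)
    (hε : (b 2 : ℝ) * (W : ℝ) * ε ≤ (a 1 : ℝ)) :
    ∀ j : ℕ, 2 ≤ j → j ≤ k → (a j : ℤ) ≤ b j := by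
  set c : ℝ := (b 2 : ℝ) * (W : ℝ) * ε
  have hcL : c / L ≤ 1 := div_le_one_of_le₀ (hε.trans (by exact_mod_cast ha1L.le)) L.cast_nonneg
  intro j hj
  induction j, hj using Nat.le_induction with
  | base =>
    intro h2k
    rw [hb2]
    exact (harec 2 le_rfl h2k).trans
      (sub_ceil_mul_div_le_ceil_div (Int.natCast_nonneg _) (by exact_mod_cast hL) hw2)
  | succ j hj ih =>
    intro hjk
    have hcw : c ≤ w (j + 1) := hε.trans (by exact_mod_cast hwj (j + 1) (by omega) hjk)
    have hblock : ⌈(a j : ℝ) * c / L⌉ ≤ ⌈(a j : ℝ) * w (j + 1) / L⌉ := by gcongr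
    have hmono : (a j : ℤ) - ⌈(a j : ℝ) * c / L⌉ ≤ b j - ⌈(b j : ℝ) * c / L⌉ := by
      simpa only [Int.cast_natCast, ← mul_div_assoc] using monotone_sub_ceil_mul hcL (ih (by omega))
    have ha := harec (j + 1) (by omega) hjk
    have hb : b (j + 1) = b j - ⌈(b j : ℝ) * c / L⌉ := by
      rw [hbrec (j + 1) (by omega) hjk]
      simp only [c, Nat.add_sub_cancel, mul_assoc]
    simp only [Nat.add_sub_cancel] at ha
    omega

/-- Theorem comparing the blocking-algorithm outputs `a_j` with the
recursive majorant `b_j`: let `L, W` be positive integers, `k ≥ 2` an integer,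
`a_1,...,a_k` nonnegative integers with `0 < a_1 < L`, and `w_2,...,w_k` nonnegative
integers with `w_2 ≥ L − L/W`, `w_j ≥ a_1` for `3 ≤ j ≤ k`, and
`a_j ≤ a_{j−1} − ⌈a_{j−1}·w_j / L⌉` for `2 ≤ j ≤ k`. Let `ε` be a real number with
`b_2·W·ε ≤ a_1` where `b_2 = ⌈a_1/W⌉`, and define
`b_j = b_{j−1} − ⌈b_{j−1}·b_2·W·ε / L⌉` for `3 ≤ j ≤ k`.
Then `a_j ≤ b_j` for all `2 ≤ j ≤ k`. -/
theorem blocking_majorant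
    (L W k : ℕ) (hL : 0 < L) (hW : 0 < W) (hk : 2 ≤ k)
    (a w : ℕ → ℕ) (b : ℕ → ℤ) (ε : ℝ)
    (ha1 : 0 < a 1) (ha1L : a 1 < L)
    (hw2 : (L : ℝ) - (L : ℝ) / (W : ℝ) ≤ (w 2 : ℝ))
    (hwj : ∀ j : ℕ, 3 ≤ j → j ≤ k → a 1 ≤ w j)
    (harec : ∀ j : ℕ, 2 ≤ j → j ≤ k →
      (a j : ℤ) ≤ (a (j - 1) : ℤ) - ⌈((a (j - 1) : ℝ) * (w j : ℝ)) / (L : ℝ)⌉)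
    (hb2 : b 2 = ⌈(a 1 : ℝ) / (W : ℝ)⌉)
    (hbrec : ∀ j : ℕ, 3 ≤ j → j ≤ k →
      b j = b (j - 1) - ⌈((b (j - 1) : ℝ) * (b 2 : ℝ) * (W : ℝ) * ε) / (L : ℝ)⌉)
    (hε : (b 2 : ℝ) * (W : ℝ) * ε ≤ (a 1 : ℝ)) :
    ∀ j : ℕ, 2 ≤ j → j ≤ k → (a j : ℤ) ≤ b j :=
  blocking_majorant_general L W k hL a w b ε ha1L hw2 hwj harec hb2 hbrec hε
end

section
/- Let W ≥ 2 and w ≥ 1 be integers, let p be a prime with p ≥ max{w, 2W−2}, let q be an integer coprime with both p and 2W satisfying q ≥ 2w−1, and let L' = pq. Let n ∈ {1,...,p−1} and let u_n be the CRT-UI sequence with generator n and weight w. For each m ∈ {1,...,W}, let δ_m be the unique element of Z_{L'} with Φ_{p,q}(δ_m) = (m−1, 0). Then for all distinct m, x ∈ {1,...,W}, every τ ∈ Z_{L'}, and each of the four sign choices, min( H_{n,n}(τ), H_{n,n}(τ ± (δ_m ± δ_x)) ) ≤ 1, where H_{n,n} is the Hamming auto-correlation of u_n. -/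
lemma ZMod.natCast_mod_of_dvd_s15 {n M : ℕ} (hn : n ∣ M) (a : ℕ) : ((a % M : ℕ) : ZMod n) = a :=
  (ZMod.natCast_eq_natCast_iff' _ _ _).mpr (Nat.mod_mod_of_dvd a hn)

lemma ZMod.natCast_toNat_emod_of_dvd {n : ℕ} {M : ℤ} (hn : (n : ℤ) ∣ M) (hM : M ≠ 0) (z : ℤ) :
    (((z % M).toNat : ℕ) : ZMod n) = z := by
  rw [← Int.cast_natCast, Int.toNat_of_nonneg (Int.emod_nonneg z hM), ← ZMod.intCast_mod,
    Int.emod_emod_of_dvd z hn, ZMod.intCast_mod]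

lemma not_dvd_pred_add_sign_mul_pred {p W m x : ℕ} {e : ℤ} (hpW : 2 * W - 2 ≤ p)
    (hm1 : 1 ≤ m) (hmW : m ≤ W) (hx1 : 1 ≤ x) (hxW : x ≤ W) (hmx : m ≠ x)
    (he : e = 1 ∨ e = -1) : ¬ (p : ℤ) ∣ ((m - 1 : ℕ) : ℤ) + e * ((x - 1 : ℕ) : ℤ) := by
  intro hdvd
  have := Int.eq_zero_of_abs_lt_dvd hdvd (by rcases he with rfl | rfl <;> rw [abs_lt] <;> omega)
  rcases he with rfl | rfl <;> omega

section CRTUI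

variable {p q w g : ℕ}

lemma exists_of_crtUI_ne_zero {t : ℕ} (h : crtUI p q w g t ≠ 0) :
    ∃ u < w, (t : ZMod p) = u * g ∧ (t : ZMod q) = u := by
  by_contra hne
  apply h
  rw [crtUI, if_neg]
  rintro ⟨u, hu, hup, huq⟩
  refine hne ⟨u, Finset.mem_range.mp hu, ?_, ?_⟩
  · exact_mod_cast (ZMod.natCast_eq_natCast_iff' _ _ _).mpr hup
  · exact (ZMod.natCast_eq_natCast_iff' _ _ _).mpr huq

lemma exists_of_crtUIAutoCorr_pos {σ : ℕ} (h : 0 < crtUIAutoCorr p q w g σ) :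
    ∃ u < w, ∃ v < w, (σ : ZMod p) = (v - u) * g ∧ (σ : ZMod q) = v - u := by
  obtain ⟨t, -, hne⟩ := Finset.exists_ne_zero_of_sum_ne_zero h.ne'
  obtain ⟨u, hu, hup, huq⟩ := exists_of_crtUI_ne_zero (left_ne_zero_of_mul hne)
  obtain ⟨v, hv, hvp, hvq⟩ := exists_of_crtUI_ne_zero (right_ne_zero_of_mul hne)
  rw [ZMod.natCast_mod_of_dvd_s15 (dvd_mul_right p q)] at hvp
  rw [ZMod.natCast_mod_of_dvd_s15 (dvd_mul_left q p)] at hvq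
  push_cast at hvp hvq
  exact ⟨u, hu, v, hv, by linear_combination hvp - hup, by linear_combination hvq - huq⟩

lemma natCast_eq_of_crtUIAutoCorr_pos (hq : 2 * w - 1 ≤ q) {σ σ' : ℕ}
    (h : 0 < crtUIAutoCorr p q w g σ) (h' : 0 < crtUIAutoCorr p q w g σ')
    (hσq : (σ : ZMod q) = σ') : (σ : ZMod p) = σ' := by
  obtain ⟨u, hu, v, hv, hσp, hσq'⟩ := exists_of_crtUIAutoCorr_pos h
  obtain ⟨u', hu', v', hv', hσp', hσq''⟩ := exists_of_crtUIAutoCorr_pos h'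
  have hdvd : (q : ℤ) ∣ ((v : ℤ) - u) - ((v' : ℤ) - u') := by
    rw [← ZMod.intCast_zmod_eq_zero_iff_dvd]
    push_cast
    linear_combination -hσq' + hσq'' + hσq
  have hdiff : (v : ℤ) - u = v' - u' := by
    have := Int.eq_zero_of_abs_lt_dvd hdvd (by rw [abs_lt]; omega)
    omega
  have hdiff_p := congrArg (Int.cast : ℤ → ZMod p) hdiff
  push_cast at hdiff_p
  rw [hσp, hσp', hdiff_p]

end CRTUI

theorem crtUI_autoCorr_min_le_one_general
    (W w p q : ℕ) (hw : 1 ≤ w)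
    (hpW : 2 * W - 2 ≤ p)
    (hq : 2 * w - 1 ≤ q)
    (n : ℕ)
    (δ : ℕ → ℕ)
    (hδ : ∀ m : ℕ, 1 ≤ m → m ≤ W →
      δ m < p * q ∧ δ m % p = (m - 1) % p ∧ δ m % q = 0)
    (m x : ℕ) (hm1 : 1 ≤ m) (hmW : m ≤ W) (hx1 : 1 ≤ x) (hxW : x ≤ W) (hmx : m ≠ x)
    (τ : ℕ) :
    ∀ e₁ e₂ : ℤ, (e₁ = 1 ∨ e₁ = -1) → (e₂ = 1 ∨ e₂ = -1) →
      min (crtUIAutoCorr p q w n τ)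
        (crtUIAutoCorr p q w n
          (((τ : ℤ) + e₁ * ((δ m : ℤ) + e₂ * (δ x : ℤ))) % ((p : ℤ) * q)).toNat)
        ≤ 1 := by
  intro e₁ e₂ he₁ he₂
  by_contra! hmin
  rw [lt_min_iff] at hmin
  set τ' := (((τ : ℤ) + e₁ * ((δ m : ℤ) + e₂ * (δ x : ℤ))) % ((p : ℤ) * q)).toNat
  have hpq : (p : ℤ) * q ≠ 0 := mul_ne_zero (by omega) (by omega)
  have hδp : ∀ k, 1 ≤ k → k ≤ W → (δ k : ZMod p) = ((k - 1 : ℕ) : ZMod p) := fun k hk1 hkW =>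
    (ZMod.natCast_eq_natCast_iff' _ _ _).mpr (hδ k hk1 hkW).2.1
  have hδq : ∀ k, 1 ≤ k → k ≤ W → (δ k : ZMod q) = 0 := fun k hk1 hkW =>
    (ZMod.natCast_eq_zero_iff _ _).mpr (Nat.dvd_of_mod_eq_zero (hδ k hk1 hkW).2.2)
  have hτ'q : (τ' : ZMod q) = τ := by
    rw [ZMod.natCast_toNat_emod_of_dvd (dvd_mul_left _ _) hpq]
    push_cast
    rw [hδq m hm1 hmW, hδq x hx1 hxW]
    ring
  have hτ'p : (τ' : ZMod p) =
      τ + e₁ * ((((m - 1 : ℕ) : ℤ) + e₂ * ((x - 1 : ℕ) : ℤ) : ℤ) : ZMod p) := by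
    rw [ZMod.natCast_toNat_emod_of_dvd (dvd_mul_right _ _) hpq]
    push_cast
    rw [hδp m hm1 hmW, hδp x hx1 hxW]
  have hτp : (τ : ZMod p) = τ' :=
    natCast_eq_of_crtUIAutoCorr_pos hq (one_pos.trans hmin.1) (one_pos.trans hmin.2) hτ'q.symm
  apply not_dvd_pred_add_sign_mul_pred hpW hm1 hmW hx1 hxW hmx he₂
  rw [← ZMod.intCast_zmod_eq_zero_iff_dvd]
  rcases he₁ with rfl | rfl <;> push_cast at hτ'p ⊢
  · linear_combination -hτ'p - hτp
  · linear_combination hτ'p + hτp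

/-- Proposition on pre-assigned offsets: let `W ≥ 2`, `w ≥ 1`, `p`
a prime with `p ≥ max{w, 2W−2}`, `q` coprime with both `p` and `2W` with `q ≥ 2w−1`,
and `L' = pq`. Let `u_n` be the CRT-UI sequence with generator `n ∈ {1,...,p−1}`, and
for `m ∈ {1,...,W}` let `δ_m ∈ Z_{L'}` be the unique element with
`Φ_{p,q}(δ_m) = (m−1, 0)`. Then for all distinct `m, x ∈ {1,...,W}`, every
`τ ∈ Z_{L'}` and each of the four sign choices,
`min( H_{n,n}(τ), H_{n,n}(τ ± (δ_m ± δ_x)) ) ≤ 1`. -/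
theorem crtUI_autoCorr_min_le_one
    (W w p q : ℕ) (hW : 2 ≤ W) (hw : 1 ≤ w)
    (hp : p.Prime) (hpw : w ≤ p) (hpW : 2 * W - 2 ≤ p)
    (hqp : Nat.Coprime q p) (hqW : Nat.Coprime q (2 * W)) (hq : 2 * w - 1 ≤ q)
    (n : ℕ) (hn1 : 1 ≤ n) (hn2 : n ≤ p - 1)
    (δ : ℕ → ℕ)
    (hδ : ∀ m : ℕ, 1 ≤ m → m ≤ W →
      δ m < p * q ∧ δ m % p = (m - 1) % p ∧ δ m % q = 0)
    (m x : ℕ) (hm1 : 1 ≤ m) (hmW : m ≤ W) (hx1 : 1 ≤ x) (hxW : x ≤ W) (hmx : m ≠ x)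
    (τ : ℕ) (hτ : τ < p * q) :
    ∀ e₁ e₂ : ℤ, (e₁ = 1 ∨ e₁ = -1) → (e₂ = 1 ∨ e₂ = -1) →
      min (crtUIAutoCorr p q w n τ)
        (crtUIAutoCorr p q w n
          (((τ : ℤ) + e₁ * ((δ m : ℤ) + e₂ * (δ x : ℤ))) % ((p : ℤ) * q)).toNat)
        ≤ 1 :=
  crtUI_autoCorr_min_le_one_general W w p q hw hpW hq n δ hδ m x hm1 hmW hx1 hxW hmx τ
end

section
/- For every positive real number x, letting d be the unique positive integer with √(d−1) < x ≤ √d, define F(x) = x/d + (1/x)·Σ_{i=2}^{d} 1/i (the sum being empty when d = 1). Then F(x) ≤ 3/(2√2) for all x > 0, and F attains this global maximum value at x = √2. -/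
/-
On the piece `(√(d-1), √d]` we have `F(x) = x/d + (H_d - 1)/x` with `H_d` the harmonic number;
this is convex in `x`, so `F` is at most its values at the two endpoints, which are `H_{d-1}/√(d-1)`
and `H_d/√d`. It therefore suffices that `H_n ≤ (3/(2√2)) √n` for all `n`, with equality at
`n = 2`. This is checked directly for `n ≤ 3`, and for `n ≥ 3` the increment `1/(n+1)` is at most
`√(n+1) - √n = 1/(√(n+1) + √n)` because `√(n+1) + √n ≤ 2√(n+1) ≤ n + 1`.
-/

open Finset Real Set

/-- The piecewise function `F : (0,∞) → ℝ` defined on each subinterval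
`I_d = (√(d−1), √d]` by `F(x) = x/d + (1/x)·Σ_{i=2}^{d} 1/i`. For `x > 0`, the
unique positive integer `d` with `√(d−1) < x ≤ √d` is `d = ⌈x²⌉`. -/
noncomputable def Fpiece (x : ℝ) : ℝ :=
  x / ((⌈x ^ 2⌉ : ℤ) : ℝ) + (1 / x) * ∑ i ∈ Finset.Icc 2 (⌈x ^ 2⌉.toNat), (1 : ℝ) / i

lemma one_le_three_div_two_mul_sqrt_two : 1 ≤ 3 / (2 * √2) := by
  rw [le_div_iff₀ (by positivity)]
  nlinarith [sq_sqrt (show (0 : ℝ) ≤ 2 by norm_num), sqrt_nonneg 2]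

lemma inv_add_one_le_sqrt_add_one_sub_sqrt {x : ℝ} (hx : 3 ≤ x) :
    (x + 1)⁻¹ ≤ √(x + 1) - √x := by
  have hs := sq_sqrt (show 0 ≤ x by linarith)
  have ht := sq_sqrt (show 0 ≤ x + 1 by linarith)
  have hs0 := sqrt_nonneg x
  have ht2 : 2 ≤ √(x + 1) := by nlinarith [sqrt_nonneg (x + 1)]
  rw [inv_le_iff_one_le_mul₀ (by linarith)]
  nlinarith [sqrt_le_sqrt (show x ≤ x + 1 by linarith)]

lemma harmonic_le_mul_sqrt (n : ℕ) : (harmonic n : ℝ) ≤ 3 / (2 * √2) * √n := by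
  have hc := one_le_three_div_two_mul_sqrt_two
  have h2 := sq_sqrt (show (0 : ℝ) ≤ 2 by norm_num)
  rcases lt_or_ge n 3 with hn | hn
  · interval_cases n
    · simp
    · simpa using hc
    · rw [div_mul_eq_mul_div, le_div_iff₀ (by positivity)]
      norm_num [harmonic_succ]
      nlinarith
  induction n, hn using Nat.le_induction with
  | base =>
    have h3 := sq_sqrt (show (0 : ℝ) ≤ 3 by norm_num)
    rw [div_mul_eq_mul_div, le_div_iff₀ (by positivity)]
    norm_num [harmonic_succ]
    nlinarith [sqrt_nonneg 2, sqrt_nonneg 3]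
  | succ n hn ih =>
    have hstep := inv_add_one_le_sqrt_add_one_sub_sqrt (x := n) (by exact_mod_cast hn)
    have hmono : √n ≤ √(n + 1) := sqrt_le_sqrt (by linarith)
    rw [harmonic_succ]
    push_cast
    linarith [mul_le_mul_of_nonneg_right hc (sub_nonneg.2 hmono)]

lemma harmonic_div_sqrt_le (n : ℕ) : (harmonic n : ℝ) / √n ≤ 3 / (2 * √2) :=
  div_le_of_le_mul₀ (sqrt_nonneg _) (by positivity) (harmonic_le_mul_sqrt n)

lemma div_add_div_le_max {p q a b x : ℝ} (hq : 0 ≤ q) (ha : 0 < a) (hx : x ∈ Icc a b) :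
    x / p + q / x ≤ max (a / p + q / a) (b / p + q / b) := by
  have hconv : ConvexOn ℝ (Ioi 0) fun y : ℝ => y / p + q / y := by
    refine (((LinearMap.mulRight ℝ p⁻¹).convexOn (convex_Ioi 0)).add
      ((convexOn_zpow (-1)).smul hq)).congr fun y _ => ?_
    simp [div_eq_mul_inv]
  exact hconv.le_max_of_mem_Icc ha (ha.trans_le (hx.1.trans hx.2)) hx

lemma sum_Icc_two_one_div_eq_harmonic_sub_one {n : ℕ} (hn : 1 ≤ n) :
    ∑ i ∈ Finset.Icc 2 n, (1 : ℝ) / i = harmonic n - 1 := by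
  rw [harmonic_eq_sum_Icc, ← add_sum_Ioc_eq_sum_Icc hn, ← Finset.Icc_add_one_left_eq_Ioc]
  push_cast
  simp only [one_div]
  ring

/-- `Fpiece` on the piece `(√(d-1), √d]`, with `Σ_{i=2}^d 1/i` written as `H_d - 1`. -/
noncomputable def Fbranch (d : ℕ) (x : ℝ) : ℝ := x / d + (harmonic d - 1) / x

lemma Fpiece_eq_Fbranch {x : ℝ} (hx : 0 < x) : Fpiece x = Fbranch ⌈x ^ 2⌉₊ x := by
  have hd : 1 ≤ ⌈x ^ 2⌉₊ := Nat.one_le_iff_ne_zero.2 (Nat.ceil_pos.2 (by positivity)).ne'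
  rw [Fpiece, Fbranch, Int.ceil_toNat, ← natCast_ceil_eq_intCast_ceil (by positivity),
    sum_Icc_two_one_div_eq_harmonic_sub_one hd, one_div_mul_eq_div]

lemma Fbranch_sqrt (d : ℕ) : Fbranch d √d = harmonic d / √d := by
  rcases Nat.eq_zero_or_pos d with rfl | hd
  · simp [Fbranch]
  have hs : 0 < √(d : ℝ) := sqrt_pos.2 (by exact_mod_cast hd)
  rw [Fbranch]
  field_simp
  rw [sq_sqrt d.cast_nonneg]
  ring

lemma Fbranch_add_one_sqrt (n : ℕ) : Fbranch (n + 1) √n = harmonic n / √n := by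
  rcases Nat.eq_zero_or_pos n with rfl | hn
  · simp [Fbranch]
  have hs : 0 < √(n : ℝ) := sqrt_pos.2 (by exact_mod_cast hn)
  rw [Fbranch, harmonic_succ]
  push_cast
  field_simp
  rw [sq_sqrt n.cast_nonneg]
  ring

lemma Fbranch_le {n : ℕ} {x : ℝ} (hx : x ∈ Ioc √n √(n + 1)) :
    Fbranch (n + 1) x ≤ 3 / (2 * √2) := by
  rcases Nat.eq_zero_or_pos n with rfl | hn
  · have hx1 : x ≤ 1 := by simpa using hx.2
    simpa [Fbranch] using hx1.trans one_le_three_div_two_mul_sqrt_two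
  have hq : 0 ≤ (harmonic (n + 1) : ℝ) - 1 := by
    rw [← sum_Icc_two_one_div_eq_harmonic_sub_one (by omega)]
    positivity
  have hmax : Fbranch (n + 1) x ≤ max (Fbranch (n + 1) √n) (Fbranch (n + 1) √(n + 1 : ℕ)) :=
    div_add_div_le_max hq (sqrt_pos.2 (by exact_mod_cast hn))
      (by exact_mod_cast Ioc_subset_Icc_self hx)
  rw [Fbranch_add_one_sqrt, Fbranch_sqrt] at hmax
  exact hmax.trans (max_le (harmonic_div_sqrt_le n) (harmonic_div_sqrt_le (n + 1)))

lemma mem_Ioc_sqrt_of_ceil_sq_eq {x : ℝ} {n : ℕ} (hx : 0 < x) (h : ⌈x ^ 2⌉₊ = n + 1) :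
    x ∈ Ioc √n √(n + 1) := by
  constructor
  · rw [sqrt_lt' hx, ← Nat.lt_ceil, h]
    exact n.lt_succ_self
  · rw [le_sqrt' hx]
    exact_mod_cast h ▸ Nat.le_ceil (x ^ 2)

/-- `F(x) ≤ 3/(2√2)` for all `x > 0`, and this global maximum is
attained at `x = √2`. -/
theorem Fpiece_le_and_max :
    (∀ x : ℝ, 0 < x → Fpiece x ≤ 3 / (2 * Real.sqrt 2)) ∧
    Fpiece (Real.sqrt 2) = 3 / (2 * Real.sqrt 2) := by
  refine ⟨fun x hx => ?_, ?_⟩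
  · obtain ⟨n, hn⟩ := Nat.exists_eq_add_one.2 (Nat.ceil_pos.2 (pow_pos hx 2))
    rw [Fpiece_eq_Fbranch hx, hn]
    exact Fbranch_le (mem_Ioc_sqrt_of_ceil_sq_eq hx hn)
  · have hceil : ⌈√2 ^ 2⌉₊ = 2 := by simp
    have hvalue := Fbranch_sqrt 2
    rw [Fpiece_eq_Fbranch (by positivity), hceil]
    norm_num [harmonic_succ] at hvalue ⊢
    rw [hvalue, div_div]
end
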